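/- Let x ∈ {0,1}^n be such that Σ_{i=1}^m a'_i x_i ≤ 1 and x_i = 0 for all i ∈ {m+1,…,n}. Then g(x, M) = Σ_{i=1}^m v_i (1 − x_i) + M (1 − Σ_{i=1}^m a'_i x_i). -/

import Mathlib

open Classical
noncomputable section

/-- A knapsack instance `a, v ∈ ℕ^m`, `b ∈ ℕ` with `1 ≤ a_i ≤ b - 1`, `1 ≤ v_i`,
and `b` dividing `∑ a_i` (items indexed by `1, …, m`). -/
structure KnapInstance where
  m : ℕ
  b : ℕ
  a : ℕ → ℕ
  v : ℕ → ℕ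
  hm : 1 ≤ m
  ha : ∀ i ∈ Finset.Icc 1 m, 1 ≤ a i ∧ a i ≤ b - 1
  hv : ∀ i ∈ Finset.Icc 1 m, 1 ≤ v i
  hb : b ∣ ∑ i ∈ Finset.Icc 1 m, a i

namespace KnapInstance

variable (K : KnapInstance)

/-- `A' = (∑ a_i)/b` (an integer). -/
def A' : ℕ := (∑ i ∈ Finset.Icc 1 K.m, K.a i) / K.b

/-- Number of items of the constructed instance: `n = 2m - A' + 3`. -/
def nn : ℕ := 2 * K.m - K.A' + 3

/-- Number of items to select: `p = 2m - 2A' + 3`. -/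
def pp : ℕ := 2 * K.m - 2 * K.A' + 3

/-- Uncertainty budget: `Γ = m - A' + 1`. -/
def Gam : ℝ := (K.m : ℝ) - (K.A' : ℝ) + 1

/-- `V = ∑ v_i`. -/
def V : ℕ := ∑ i ∈ Finset.Icc 1 K.m, K.v i

/-- The large constant `M = 3mbV`. -/
def M : ℝ := 3 * (K.m : ℝ) * (K.b : ℝ) * (K.V : ℝ)

/-- Scaled sizes `a'_i = a_i / b`. -/
def a' (i : ℕ) : ℝ := (K.a i : ℝ) / (K.b : ℝ)

/-- First-stage costs of the constructed instance. -/
def C (i : ℕ) : ℝ := if i ≤ K.m then K.M * K.a' i else ((K.m : ℝ) + 3) * K.M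

/-- Lower second-stage costs `c̲` of the constructed instance. -/
def cl (i : ℕ) : ℝ :=
  if i ≤ K.m then (K.v i : ℝ) / (1 - K.a' i) else if i = K.m + 1 then K.M else 0

/-- Deviations `d` of the constructed instance. -/
def d (i : ℕ) : ℝ := if i ≤ K.m then K.M / (1 - K.a' i) else K.M

/-- `g(x, π)`: the optimal value of
`min ∑_{i∈R_x} c̲_i y_i + ∑_{i∈R_x} ρ_i` s.t. `∑_{i∈R_x} y_i = p_x`,
`π + ρ_i ≥ d_i y_i` for `i ∈ R_x`, `y ∈ [0,1]^{R_x}`, `ρ ≥ 0`, where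
`R_x = {i ∈ [n] : x_i = 0}` and `p_x = p - ∑_i x_i`. -/
def g (x : ℕ → ℝ) (π : ℝ) : ℝ :=
  sInf {val | ∃ y ρ : ℕ → ℝ,
    (∀ i ∈ Finset.Icc 1 K.nn, x i = 0 →
      (0 ≤ y i ∧ y i ≤ 1 ∧ 0 ≤ ρ i ∧ K.d i * y i ≤ π + ρ i)) ∧
    (∑ i ∈ (Finset.Icc 1 K.nn).filter (fun i => x i = 0), y i
      = (K.pp : ℝ) - ∑ i ∈ Finset.Icc 1 K.nn, x i) ∧
    val = ∑ i ∈ (Finset.Icc 1 K.nn).filter (fun i => x i = 0), (K.cl i * y i + ρ i)}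

/-- `h_x(π) = ∑ C_i x_i + Γπ + g(x, π)`. -/
def h (x : ℕ → ℝ) (π : ℝ) : ℝ :=
  (∑ i ∈ Finset.Icc 1 K.nn, K.C i * x i) + K.Gam * π + K.g x π

end KnapInstance

section Aux

variable (K : KnapInstance)

lemma Kb2 : 2 ≤ K.b := by
  have h := K.ha 1 (by simp [Finset.mem_Icc, K.hm])
  omega

lemma KbposR : (0:ℝ) < K.b := by
  have := Kb2 K
  exact_mod_cast Nat.lt_of_lt_of_le (by norm_num) this

lemma KsumA : K.A' * K.b = ∑ i ∈ Finset.Icc 1 K.m, K.a i :=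
  Nat.div_mul_cancel K.hb

lemma Ksum_a' : ∑ i ∈ Finset.Icc 1 K.m, K.a' i = (K.A' : ℝ) := by
  have hb := KbposR K
  unfold KnapInstance.a'
  rw [← Finset.sum_div]
  rw [show (∑ i ∈ Finset.Icc 1 K.m, ((K.a i : ℝ))) = ((K.A' : ℝ) * K.b) by
    rw [← Nat.cast_sum, ← KsumA K]; push_cast; ring]
  field_simp

lemma KA'_lt_m : K.A' < K.m := by
  have h1 := KsumA K
  have h2 : ∑ i ∈ Finset.Icc 1 K.m, K.a i ≤ ∑ i ∈ Finset.Icc 1 K.m, (K.b - 1) :=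
    Finset.sum_le_sum fun i hi => (K.ha i hi).2
  have h3 : ∑ i ∈ Finset.Icc 1 K.m, (K.b - 1) = K.m * (K.b - 1) := by
    rw [Finset.sum_const, Nat.card_Icc]; simp [Nat.smul_one_eq_cast]
  have hb := Kb2 K
  have hm := K.hm
  have hlt : K.A' * K.b < K.m * K.b := by
    calc K.A' * K.b ≤ K.m * (K.b - 1) := by omega
    _ < K.m * K.b := by
        exact mul_lt_mul_of_pos_left (show K.b - 1 < K.b by omega) (show 0 < K.m by omega)
  exact lt_of_mul_lt_mul_right hlt (Nat.zero_le _)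

lemma Ka'_pos (i : ℕ) (hi : i ∈ Finset.Icc 1 K.m) : 0 < K.a' i := by
  have h := (K.ha i hi).1
  have hb := KbposR K
  have ha : (0:ℝ) < K.a i := by exact_mod_cast h
  exact div_pos ha hb

lemma Ka'_lb (i : ℕ) (hi : i ∈ Finset.Icc 1 K.m) : 1 / (K.b : ℝ) ≤ 1 - K.a' i := by
  have h := (K.ha i hi).2
  have hb2 := Kb2 K
  have hb := KbposR K
  have h' : (K.a i : ℝ) ≤ (K.b : ℝ) - 1 := by
    have : (K.a i : ℝ) ≤ ((K.b - 1 : ℕ) : ℝ) := by exact_mod_cast h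
    rw [Nat.cast_sub (by omega)] at this; simpa using this
  have heq : 1 - K.a' i = ((K.b : ℝ) - K.a i) / K.b := by
    unfold KnapInstance.a'; field_simp
  rw [heq, div_le_div_iff₀ hb hb]
  nlinarith

lemma Kone_sub_a'_pos (i : ℕ) (hi : i ∈ Finset.Icc 1 K.m) : 0 < 1 - K.a' i := by
  have := Ka'_lb K i hi
  have hb := KbposR K
  have : (0:ℝ) < 1 / K.b := by positivity
  linarith [Ka'_lb K i hi]

lemma KV1 : 1 ≤ K.V := by
  have h := K.hv 1 (by simp [Finset.mem_Icc, K.hm])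
  have : K.v 1 ≤ K.V := by
    apply Finset.single_le_sum (f := fun i => K.v i) (fun i _ => Nat.zero_le _)
    simp [Finset.mem_Icc, K.hm]
  omega

lemma KMpos : 0 < K.M := by
  have h1 := K.hm
  have h2 := Kb2 K
  have h3 := KV1 K
  unfold KnapInstance.M
  have hm' : (0:ℝ) < K.m := by exact_mod_cast h1
  have hb' : (0:ℝ) < K.b := by positivity
  have hV' : (0:ℝ) < K.V := by exact_mod_cast h3
  exact mul_pos (mul_pos (mul_pos (by norm_num) hm') hb') hV' 

lemma Kv_le (i : ℕ) (hi : i ∈ Finset.Icc 1 K.m) : (K.v i : ℝ) ≤ K.M * (1 - K.a' i) := by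
  have h1 : (K.v i : ℝ) ≤ K.V := by
    have : K.v i ≤ K.V := Finset.single_le_sum (f := fun i => K.v i) (fun i _ => Nat.zero_le _) hi
    exact_mod_cast this
  have h2 := Ka'_lb K i hi
  have hb := KbposR K
  have hm : (1:ℝ) ≤ K.m := by exact_mod_cast K.hm
  have hV : (0:ℝ) ≤ K.V := by positivity
  have hstep : K.M * (1 / K.b) ≤ K.M * (1 - K.a' i) :=
    mul_le_mul_of_nonneg_left h2 (le_of_lt (KMpos K))
  refine le_trans ?_ hstep
  have hkey : (K.V : ℝ) ≤ K.M * (1 / K.b) := by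
    unfold KnapInstance.M
    rw [mul_one_div, le_div_iff₀ hb]
    nlinarith [mul_nonneg (mul_nonneg (by linarith : (0:ℝ) ≤ 3 * (K.m:ℝ) - 1) hb.le) hV]
  linarith

/-- pointwise bound for knapsack items -/
lemma Kpoint (v M t y ρ : ℝ) (ht : 0 < t) (ht1 : t ≤ 1) (hv : 0 ≤ v) (hvM : v ≤ M * t)
    (hy0 : 0 ≤ y) (hρ : 0 ≤ ρ) (hc : (M / t) * y ≤ M + ρ) :
    M * y + (v - M * t) ≤ (v / t) * y + ρ := by
  have hM : 0 ≤ M := by nlinarith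
  have hc' : M * y ≤ (M + ρ) * t := by
    rw [div_mul_eq_mul_div, div_le_iff₀ ht] at hc
    linarith [hc]
  have hgoal : (M * y + (v - M * t) - ρ) * t ≤ v * y := by
    rcases le_total y t with h | h
    · nlinarith [mul_nonneg (sub_nonneg.2 hvM) (sub_nonneg.2 h), mul_nonneg hρ ht.le]
    · nlinarith [mul_nonneg (mul_nonneg hM (sub_nonneg.2 h)) (sub_nonneg.2 ht1),
        mul_nonneg hv (sub_nonneg.2 h)]
  have : (v / t) * y = v * y / t := by ring
  rw [this, ← sub_le_iff_le_add, le_div_iff₀ ht]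
  linarith

end Aux

/-- If `x` encodes a feasible knapsack solution (`∑ a'_i x_i ≤ 1`, `x_i = 0` for `i > m`), then
`g(x, M) = ∑ v_i (1 - x_i) + M (1 - ∑ a'_i x_i)`. -/
theorem stmt17 (K : KnapInstance) (x : ℕ → ℝ)
    (hbin : ∀ i ∈ Finset.Icc 1 K.nn, x i = 0 ∨ x i = 1)
    (hfeas : ∑ i ∈ Finset.Icc 1 K.m, K.a' i * x i ≤ 1)
    (hzero : ∀ i ∈ Finset.Icc (K.m + 1) K.nn, x i = 0) :
    K.g x K.M = (∑ i ∈ Finset.Icc 1 K.m, (K.v i : ℝ) * (1 - x i))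
      + K.M * (1 - ∑ i ∈ Finset.Icc 1 K.m, K.a' i * x i) := by
  classical
  have hb := KbposR K
  have hM := KMpos K
  have hA'm := KA'_lt_m K
  have hnn : K.nn = 2 * K.m - K.A' + 3 := rfl
  have hpp : K.pp = 2 * K.m - 2 * K.A' + 3 := rfl
  have hmn : K.m + 1 ≤ K.nn := by omega
  have hnR : (K.nn : ℝ) = 2 * (K.m:ℝ) - K.A' + 3 := by
    rw [hnn, Nat.cast_add, Nat.cast_sub (show K.A' ≤ 2 * K.m by omega)]
    push_cast; ring
  have hpR : (K.pp : ℝ) = 2 * (K.m:ℝ) - 2 * K.A' + 3 := by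
    rw [hpp, Nat.cast_add, Nat.cast_sub (show 2 * K.A' ≤ 2 * K.m by omega)]
    push_cast; ring
  set s : ℝ := ∑ i ∈ Finset.Icc 1 K.m, K.a' i * x i with hs
  set k : ℝ := ∑ i ∈ Finset.Icc 1 K.m, x i with hk
  set T : ℝ := (∑ i ∈ Finset.Icc 1 K.m, (K.v i : ℝ) * (1 - x i)) + K.M * (1 - s) with hT
  have hsub : ∀ i ∈ Finset.Icc 1 K.m, i ∈ Finset.Icc 1 K.nn := by
    intro i hi; rw [Finset.mem_Icc] at *; omega
  have hs0 : 0 ≤ s := by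
    rw [hs]
    apply Finset.sum_nonneg
    intro i hi
    rcases hbin i (hsub i hi) with h | h
    · rw [h]; simp
    · rw [h, mul_one]; exact (Ka'_pos K i hi).le
  have hsplit : ∀ f : ℕ → ℝ, ∑ i ∈ Finset.Icc 1 K.nn, f i
      = (∑ i ∈ Finset.Icc 1 K.m, f i) + (f (K.m+1) + ∑ i ∈ Finset.Ioc (K.m+1) K.nn, f i) := by
    intro f
    rw [show Finset.Icc 1 K.nn = Finset.Ioc 0 K.nn from Finset.Icc_add_one_left_eq_Ioc 0 K.nn,
      show Finset.Icc 1 K.m = Finset.Ioc 0 K.m from Finset.Icc_add_one_left_eq_Ioc 0 K.m]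
    rw [← Finset.sum_Ioc_consecutive f (Nat.zero_le K.m) (show K.m ≤ K.nn by omega)]
    congr 1
    rw [← Finset.sum_Ioc_consecutive f (show K.m ≤ K.m+1 by omega) hmn]
    congr 1
    rw [Nat.Ioc_succ_singleton, Finset.sum_singleton]
  have hfil : ∀ f : ℕ → ℝ, ∑ i ∈ (Finset.Icc 1 K.nn).filter (fun i => x i = 0), f i
      = ∑ i ∈ Finset.Icc 1 K.nn, (if x i = 0 then f i else 0) := fun f => Finset.sum_filter _ f
  have hRsum : ∀ f : ℕ → ℝ, (∀ i ∈ Finset.Icc 1 K.m, x i = 1 → f i = 0) →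
      ∑ i ∈ (Finset.Icc 1 K.nn).filter (fun i => x i = 0), f i = ∑ i ∈ Finset.Icc 1 K.nn, f i := by
    intro f hf
    rw [hfil]
    apply Finset.sum_congr rfl
    intro i hi
    by_cases h : x i = 0
    · simp [h]
    · rw [if_neg h]
      rw [Finset.mem_Icc] at hi
      rcases hbin i (Finset.mem_Icc.mpr hi) with h0 | h1
      · exact absurd h0 h
      · by_cases him : i ≤ K.m
        · exact (hf i (Finset.mem_Icc.mpr ⟨hi.1, him⟩) h1).symm
        · exact absurd (hzero i (Finset.mem_Icc.mpr ⟨by omega, hi.2⟩)) (by rw [h1]; norm_num)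
  have hxm1 : x (K.m+1) = 0 := hzero _ (Finset.mem_Icc.mpr ⟨le_refl _, hmn⟩)
  have hxtail : ∀ i ∈ Finset.Ioc (K.m+1) K.nn, x i = 0 := by
    intro i hi; rw [Finset.mem_Ioc] at hi
    exact hzero i (Finset.mem_Icc.mpr ⟨by omega, hi.2⟩)
  have hcard : ((K.nn - (K.m+1) : ℕ) : ℝ) = (K.m:ℝ) - K.A' + 2 := by
    rw [show K.nn - (K.m+1) = K.m - K.A' + 2 by omega, Nat.cast_add,
      Nat.cast_sub (le_of_lt hA'm)]
    push_cast; ring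
  have hm1 : ¬ (K.m + 1 ≤ K.m) := by omega
  have hsum1 : ∑ i ∈ Finset.Icc 1 K.m, (1:ℝ) = (K.m:ℝ) := by
    rw [Finset.sum_const, Nat.card_Icc]; simp
  have hE1 : ∑ i ∈ Finset.Icc 1 K.m, (1 - K.a' i) * (1 - x i) = (K.m:ℝ) - K.A' - k + s := by
    have h0 : ∀ i ∈ Finset.Icc 1 K.m, (1 - K.a' i) * (1 - x i)
        = (1 - K.a' i) - (x i - K.a' i * x i) := by intro i _; ring
    rw [Finset.sum_congr rfl h0, Finset.sum_sub_distrib, Finset.sum_sub_distrib,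
      Finset.sum_sub_distrib, hsum1, Ksum_a' K, ← hs, ← hk]
    ring
  have hxsum : ∑ i ∈ Finset.Icc 1 K.nn, x i = k := by
    rw [hsplit x, hxm1, Finset.sum_eq_zero hxtail, ← hk]; ring
  -- the constructed optimal point
  set y0 : ℕ → ℝ := fun i =>
    if i ≤ K.m then (1 - K.a' i) * (1 - x i) else if i = K.m+1 then 1 - s else 1 with hy0def
  have hy0m : ∀ i ∈ Finset.Icc 1 K.m, y0 i = (1 - K.a' i) * (1 - x i) := by
    intro i hi; rw [hy0def]; simp only [if_pos (Finset.mem_Icc.mp hi).2]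
  have hy0m1 : y0 (K.m+1) = 1 - s := by
    simp [hy0def, hm1]
  have hy0tail : ∀ i ∈ Finset.Ioc (K.m+1) K.nn, y0 i = 1 := by
    intro i hi; rw [Finset.mem_Ioc] at hi
    rw [hy0def]
    simp only [if_neg (show ¬ i ≤ K.m by omega), if_neg (show ¬ i = K.m+1 by omega)]
  have hclm : ∀ i : ℕ, i ≤ K.m → K.cl i = (K.v i : ℝ) / (1 - K.a' i) := by
    intro i hi; rw [KnapInstance.cl, if_pos hi]
  have hclm1 : K.cl (K.m+1) = K.M := by
    rw [KnapInstance.cl, if_neg hm1, if_pos rfl]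
  have hcltail : ∀ i : ℕ, ¬ i ≤ K.m → i ≠ K.m + 1 → K.cl i = 0 := by
    intro i h1 h2; rw [KnapInstance.cl, if_neg h1, if_neg h2]
  -- membership
  have hmem : ∃ y ρ : ℕ → ℝ,
      (∀ i ∈ Finset.Icc 1 K.nn, x i = 0 →
        (0 ≤ y i ∧ y i ≤ 1 ∧ 0 ≤ ρ i ∧ K.d i * y i ≤ K.M + ρ i)) ∧
      (∑ i ∈ (Finset.Icc 1 K.nn).filter (fun i => x i = 0), y i
        = (K.pp : ℝ) - ∑ i ∈ Finset.Icc 1 K.nn, x i) ∧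
      T = ∑ i ∈ (Finset.Icc 1 K.nn).filter (fun i => x i = 0), (K.cl i * y i + ρ i) := by
    refine ⟨y0, fun _ => 0, ?_, ?_, ?_⟩
    · intro i hi hxi
      rw [Finset.mem_Icc] at hi
      by_cases him : i ≤ K.m
      · have hi' : i ∈ Finset.Icc 1 K.m := Finset.mem_Icc.mpr ⟨hi.1, him⟩
        have h1 := Kone_sub_a'_pos K i hi'
        have h2 := Ka'_pos K i hi'
        have hy : y0 i = 1 - K.a' i := by rw [hy0m i hi', hxi]; ring
        refine ⟨by rw [hy]; linarith, by rw [hy]; linarith, le_refl 0, ?_⟩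
        rw [hy, KnapInstance.d, if_pos him, div_mul_cancel₀ _ (ne_of_gt h1)]
        show K.M ≤ K.M + 0
        linarith
      · have hd : K.d i = K.M := by rw [KnapInstance.d, if_neg him]
        by_cases him1 : i = K.m + 1
        · have hy : y0 i = 1 - s := by rw [hy0def]; simp only [if_neg him, if_pos him1]
          refine ⟨by rw [hy]; linarith, by rw [hy]; linarith, le_refl 0, ?_⟩
          rw [hy, hd]
          show K.M * (1 - s) ≤ K.M + 0
          nlinarith
        · have hy : y0 i = 1 := by rw [hy0def]; simp only [if_neg him, if_neg him1]
          refine ⟨by rw [hy]; norm_num, by rw [hy], le_refl 0, ?_⟩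
          rw [hy, hd, mul_one]
          show K.M ≤ K.M + 0
          linarith
    · rw [hRsum y0 (by
        intro i hi h1
        rw [hy0m i hi, h1]; ring)]
      rw [hsplit y0, Finset.sum_congr rfl hy0m, hE1, hy0m1,
        Finset.sum_congr rfl hy0tail, Finset.sum_const, Nat.card_Ioc, nsmul_eq_mul,
        mul_one, hcard, hxsum, hpR]
      ring
    · have hv : ∀ i ∈ Finset.Icc 1 K.m, K.cl i * y0 i + 0 = (K.v i : ℝ) * (1 - x i) := by
        intro i hi
        have h1 := Kone_sub_a'_pos K i hi
        rw [hclm i (Finset.mem_Icc.mp hi).2, hy0m i hi, add_zero]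
        field_simp
      rw [hRsum (fun i => K.cl i * y0 i + 0) (by
        intro i hi h1
        show K.cl i * y0 i + 0 = 0
        rw [hy0m i hi, h1]; ring)]
      rw [hsplit (fun i => K.cl i * y0 i + 0), Finset.sum_congr rfl hv]
      have hv2 : (K.cl (K.m+1) * y0 (K.m+1) + 0) = K.M * (1 - s) := by
        rw [hclm1, hy0m1, add_zero]
      have hv3 : ∀ i ∈ Finset.Ioc (K.m+1) K.nn, K.cl i * y0 i + 0 = 0 := by
        intro i hi
        rw [Finset.mem_Ioc] at hi
        rw [hcltail i (by omega) (by omega), add_zero, zero_mul]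
      rw [hv2, Finset.sum_eq_zero hv3, hT]
      ring
  -- lower bound
  have lbprop : ∀ z : ℝ, (∃ y ρ : ℕ → ℝ,
      (∀ i ∈ Finset.Icc 1 K.nn, x i = 0 →
        (0 ≤ y i ∧ y i ≤ 1 ∧ 0 ≤ ρ i ∧ K.d i * y i ≤ K.M + ρ i)) ∧
      (∑ i ∈ (Finset.Icc 1 K.nn).filter (fun i => x i = 0), y i
        = (K.pp : ℝ) - ∑ i ∈ Finset.Icc 1 K.nn, x i) ∧
      z = ∑ i ∈ (Finset.Icc 1 K.nn).filter (fun i => x i = 0), (K.cl i * y i + ρ i)) →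
      T ≤ z := by
    rintro z ⟨y, ρ, hcon, hsum, hval⟩
    set μ : ℕ → ℝ := fun i =>
      if i ≤ K.m then ((K.v i:ℝ) - K.M * (1 - K.a' i)) * (1 - x i)
      else if i = K.m+1 then 0 else -K.M with hμdef
    have hstep : ∑ i ∈ (Finset.Icc 1 K.nn).filter (fun i => x i = 0), (K.M * y i + μ i)
        ≤ ∑ i ∈ (Finset.Icc 1 K.nn).filter (fun i => x i = 0), (K.cl i * y i + ρ i) := by
      apply Finset.sum_le_sum
      intro i hi
      rw [Finset.mem_filter] at hi
      obtain ⟨hiI, hix⟩ := hi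
      obtain ⟨hy0, hy1, hρ0, hd⟩ := hcon i hiI hix
      by_cases him : i ≤ K.m
      · have hi' : i ∈ Finset.Icc 1 K.m :=
          Finset.mem_Icc.mpr ⟨(Finset.mem_Icc.mp hiI).1, him⟩
        have ht := Kone_sub_a'_pos K i hi'
        have ht1 : 1 - K.a' i ≤ 1 := by linarith [Ka'_pos K i hi']
        have hvM := Kv_le K i hi'
        have hv0 : (0:ℝ) ≤ K.v i := Nat.cast_nonneg _
        have hd' : K.M / (1 - K.a' i) * y i ≤ K.M + ρ i := by
          rw [KnapInstance.d, if_pos him] at hd; exact hd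
        have hpt := Kpoint (K.v i) K.M (1 - K.a' i) (y i) (ρ i) ht ht1 hv0 hvM hy0 hρ0 hd'
        rw [hμdef, hclm i him]
        simp only [if_pos him, hix, sub_zero, mul_one]
        linarith
      · by_cases him1 : i = K.m + 1
        · subst him1
          simp only [hμdef, if_neg hm1, reduceIte, eq_self_iff_true, if_true]
          rw [hclm1]
          linarith
        · rw [hμdef, hcltail i him him1]
          simp only [if_neg him, if_neg him1]
          have hd' : K.M * y i ≤ K.M + ρ i := by
            rw [KnapInstance.d, if_neg him] at hd; exact hd
          nlinarith [mul_le_mul_of_nonneg_left hy1 hM.le]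
    have hμvanish : ∀ i ∈ Finset.Icc 1 K.m, x i = 1 → μ i = 0 := by
      intro i hi h1
      rw [hμdef]
      simp only [if_pos (Finset.mem_Icc.mp hi).2, h1]
      ring
    have hμ1 : ∀ i ∈ Finset.Icc 1 K.m, μ i
        = (K.v i:ℝ) * (1 - x i) - K.M * ((1 - K.a' i) * (1 - x i)) := by
      intro i hi
      rw [hμdef]
      simp only [if_pos (Finset.mem_Icc.mp hi).2]
      ring
    have hμm1 : μ (K.m+1) = 0 := by
      simp [hμdef, hm1]
    have hμtail : ∀ i ∈ Finset.Ioc (K.m+1) K.nn, μ i = -K.M := by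
      intro i hi
      rw [Finset.mem_Ioc] at hi
      rw [hμdef]
      simp only [if_neg (show ¬ i ≤ K.m by omega), if_neg (show ¬ i = K.m+1 by omega)]
    have hμsum : ∑ i ∈ (Finset.Icc 1 K.nn).filter (fun i => x i = 0), μ i
        = (∑ i ∈ Finset.Icc 1 K.m, (K.v i:ℝ) * (1 - x i))
          - K.M * ((K.m:ℝ) - K.A' - k + s) + (0 + (-K.M) * ((K.m:ℝ) - K.A' + 2)) := by
      rw [hRsum μ hμvanish, hsplit μ, Finset.sum_congr rfl hμ1, Finset.sum_sub_distrib,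
        ← Finset.mul_sum, hE1, hμm1, Finset.sum_congr rfl hμtail, Finset.sum_const,
        Nat.card_Ioc, nsmul_eq_mul]
      rw [show ((K.nn - (K.m+1) : ℕ) : ℝ) * (-K.M) = (-K.M) * ((K.nn - (K.m+1) : ℕ) : ℝ) by ring,
        hcard]
    have hsplit2 : ∑ i ∈ (Finset.Icc 1 K.nn).filter (fun i => x i = 0), (K.M * y i + μ i)
        = K.M * ((K.pp : ℝ) - k)
          + ∑ i ∈ (Finset.Icc 1 K.nn).filter (fun i => x i = 0), μ i := by
      rw [Finset.sum_add_distrib, ← Finset.mul_sum, hsum, hxsum]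
    have hTeq : T = K.M * ((K.pp : ℝ) - k)
        + ((∑ i ∈ Finset.Icc 1 K.m, (K.v i:ℝ) * (1 - x i))
          - K.M * ((K.m:ℝ) - K.A' - k + s) + (0 + (-K.M) * ((K.m:ℝ) - K.A' + 2))) := by
      rw [hT, hpR]; ring
    rw [hval, hTeq]
    rw [← hμsum]
    rw [← hsplit2]
    exact hstep
  unfold KnapInstance.g
  apply le_antisymm
  · exact csInf_le ⟨T, fun z hz => lbprop z hz⟩ hmem
  · exact le_csInf ⟨T, hmem⟩ lbprop
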